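/- arXiv:1708.03200 — 7 statements merged into one kernel-verified Lean document; each statement's English description precedes it below -/
import Mathlib

section
/- Under the flat tax rate r = (N−1)/(N−1+β), the taxed payoff of every player i takes the form û_i(s) = c·W(s) − c·Δ + e_i, where c = β/(N−1+β), W(s) = Σ_j u_j(s) is the social welfare, and Δ = Σ_j e_j is the total tax exemption. -/
open Finset

theorem efficient_rate_taxed_payoff_form
    (N : ℕ) (hN : 2 ≤ N)
    (S : Fin N → Type*)
    (u : Fin N → ((i : Fin N) → S i) → ℝ)
    (e : Fin N → ℝ)
    (β : ℝ) (hβ : 0 < β)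
    (r : ℝ) (hr : r = ((N : ℝ) - 1) / ((N : ℝ) - 1 + β))
    (uhat : Fin N → ((i : Fin N) → S i) → ℝ)
    (huhat : ∀ i s, uhat i s =
      u i s - (u i s - e i) * r
        + ∑ j ∈ univ.erase i, (u j s - e j) * r * β / ((N : ℝ) - 1)) :
    ∀ i s, uhat i s =
      (β / ((N : ℝ) - 1 + β)) * (∑ j, u j s)
        - (β / ((N : ℝ) - 1 + β)) * (∑ j, e j) + e i := by
  intro i s
  have hn1 : (1 : ℝ) ≤ (N : ℝ) := by exact_mod_cast Nat.one_le_of_lt hN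
  have hn : (0 : ℝ) < (N : ℝ) - 1 := by
    have : (2 : ℝ) ≤ (N : ℝ) := by exact_mod_cast hN
    linarith
  have hden : (N : ℝ) - 1 + β ≠ 0 := by positivity
  have hne : (N : ℝ) - 1 ≠ 0 := ne_of_gt hn
  have hsum : ∑ j ∈ univ.erase i, (u j s - e j) * r * β / ((N : ℝ) - 1)
      = ((∑ j, u j s) - (∑ j, e j) - (u i s - e i)) * (r * β / ((N : ℝ) - 1)) := by
    rw [Finset.sum_erase_eq_sub (Finset.mem_univ i)]
    simp only [div_eq_mul_inv]
    rw [← Finset.sum_mul, ← Finset.sum_mul, ← Finset.sum_mul, Finset.sum_sub_distrib]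
    ring
  rw [huhat, hsum, hr]
  field_simp
  ring
end

section
/- Under the flat tax rate r = (N−1)/(N−1+β), the taxation version of any static strategic game is an exact potential game up to a positive constant factor: for every player i, every pair of own strategies s_i, s_i', and every profile s_{-i} of the others, û_i(s_i, s_{-i}) − û_i(s_i', s_{-i}) = c·(W(s_i, s_{-i}) − W(s_i', s_{-i})) with c = β/(N−1+β) > 0, so W is a (weighted) potential function for the taxed game. -/
open Finset

theorem taxed_game_is_weighted_potential
    (N : ℕ) (hN : 2 ≤ N)
    (S : Fin N → Type*)
    (u : Fin N → ((i : Fin N) → S i) → ℝ)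
    (e : Fin N → ℝ)
    (β : ℝ) (hβ : 0 < β)
    (r : ℝ) (hr : r = ((N : ℝ) - 1) / ((N : ℝ) - 1 + β))
    (uhat : Fin N → ((i : Fin N) → S i) → ℝ)
    (huhat : ∀ i s, uhat i s =
      u i s - (u i s - e i) * r
        + ∑ j ∈ univ.erase i, (u j s - e j) * r * β / ((N : ℝ) - 1))
    (W : ((i : Fin N) → S i) → ℝ)
    (hW : ∀ s, W s = ∑ j, u j s) :
    0 < β / ((N : ℝ) - 1 + β) ∧
    ∀ (i : Fin N) (s : (i : Fin N) → S i) (si' : S i),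
      uhat i s - uhat i (Function.update s i si') =
        (β / ((N : ℝ) - 1 + β)) * (W s - W (Function.update s i si')) := by
  have hN2 : (2:ℝ) ≤ (N:ℝ) := by exact_mod_cast hN
  have hN1 : ((N:ℝ) - 1) ≠ 0 := by linarith
  have hD : ((N:ℝ) - 1 + β) > 0 := by linarith
  have hD' : ((N:ℝ) - 1 + β) ≠ 0 := ne_of_gt hD
  refine ⟨div_pos hβ hD, ?_⟩
  intro i s si'
  set s' := Function.update s i si' with hs'
  have hsum : ∀ t : (i : Fin N) → S i,
      ∑ j ∈ univ.erase i, (u j t - e j) * r * β / ((N:ℝ) - 1)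
        = ((∑ j ∈ univ.erase i, u j t) - ∑ j ∈ univ.erase i, e j) * r * β / ((N:ℝ) - 1) := by
    intro t
    rw [← Finset.sum_div, ← Finset.sum_mul, ← Finset.sum_mul, Finset.sum_sub_distrib]
  have hWsplit : ∀ t : (i : Fin N) → S i,
      W t = u i t + ∑ j ∈ univ.erase i, u j t := by
    intro t
    rw [hW, ← Finset.add_sum_erase _ _ (Finset.mem_univ i)]
  rw [huhat, huhat, hsum, hsum, hWsplit, hWsplit, hr]
  field_simp
  ring
end

section
/- Under the flat tax rate r = (N−1)/(N−1+β), every strategy profile s* that maximizes the social welfare W of the original game is a Nash equilibrium of the taxation version of the game. In particular, if W attains a maximum (e.g., when all strategy sets are finite and nonempty), the taxation version has at least one Nash equilibrium, and that equilibrium is socially efficient for the original game. -/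
open Finset

theorem welfare_maximizer_is_NE_of_taxed_game
    (N : ℕ) (hN : 2 ≤ N)
    (S : Fin N → Type*)
    (u : Fin N → ((i : Fin N) → S i) → ℝ)
    (e : Fin N → ℝ)
    (β : ℝ) (hβ : 0 < β)
    (r : ℝ) (hr : r = ((N : ℝ) - 1) / ((N : ℝ) - 1 + β))
    (uhat : Fin N → ((i : Fin N) → S i) → ℝ)
    (huhat : ∀ i s, uhat i s =
      u i s - (u i s - e i) * r
        + ∑ j ∈ univ.erase i, (u j s - e j) * r * β / ((N : ℝ) - 1))
    (W : ((i : Fin N) → S i) → ℝ)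
    (hW : ∀ s, W s = ∑ j, u j s)
    (sstar : (i : Fin N) → S i)
    (hmax : ∀ s, W s ≤ W sstar) :
    ∀ (i : Fin N) (si' : S i),
      uhat i (Function.update sstar i si') ≤ uhat i sstar := by
  intro i si'
  have hd : (0:ℝ) < (N:ℝ) - 1 := by
    have h2 : (2:ℝ) ≤ (N:ℝ) := by exact_mod_cast hN
    linarith
  have hdb : (0:ℝ) < (N:ℝ) - 1 + β := by linarith
  set c : ℝ := r * β / ((N:ℝ) - 1) with hc_def
  have hc : 1 - r = c := by
    rw [hc_def, hr]
    field_simp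
    ring
  have hcpos : 0 ≤ c := by
    rw [hc_def, hr]
    positivity
  have key : ∀ s, uhat i s = c * W s + (e i * r - c * ∑ j ∈ univ.erase i, e j) := by
    intro s
    rw [huhat, hW]
    have hsum : ∑ j, u j s = u i s + ∑ j ∈ univ.erase i, u j s :=
      (Finset.add_sum_erase _ _ (mem_univ i)).symm
    have hsplit : ∑ j ∈ univ.erase i, (u j s - e j) * r * β / ((N:ℝ) - 1)
        = c * (∑ j ∈ univ.erase i, u j s) - c * (∑ j ∈ univ.erase i, e j) := by
      rw [Finset.mul_sum, Finset.mul_sum, ← Finset.sum_sub_distrib]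
      refine Finset.sum_congr rfl fun j _ => ?_
      rw [hc_def]
      field_simp
    rw [hsplit, hsum]
    linear_combination (u i s) * hc
  rw [key, key]
  have hW' := hmax (Function.update sstar i si')
  have := mul_le_mul_of_nonneg_left hW' hcpos
  linarith
end

section
/- Under the flat tax rate r = (N−1)/(N−1+β) and at any social-welfare-maximizing profile s* (so W(s*) = W̄ is the maximal social welfare), each player's taxed payoff is û_i(s*) = c·W̄ − c·Δ + e_i with c = β/(N−1+β) and Δ = Σ_j e_j. Consequently: (i) û_i(s*) is strictly increasing in e_i and strictly decreasing in e_j for j ≠ i; (ii) for any two players i, j, û_i(s*) ≥ û_j(s*) if and only if e_i ≥ e_j. -/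
open Finset

theorem exemptions_control_payoff_division
    (N : ℕ) (hN : 2 ≤ N)
    (S : Fin N → Type*)
    (u : Fin N → ((i : Fin N) → S i) → ℝ)
    (β : ℝ) (hβ : 0 < β)
    (r : ℝ) (hr : r = ((N : ℝ) - 1) / ((N : ℝ) - 1 + β))
    (uhat : (Fin N → ℝ) → Fin N → ((i : Fin N) → S i) → ℝ)
    (huhat : ∀ (e : Fin N → ℝ) i s, uhat e i s =
      u i s - (u i s - e i) * r
        + ∑ j ∈ univ.erase i, (u j s - e j) * r * β / ((N : ℝ) - 1))
    (W : ((i : Fin N) → S i) → ℝ)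
    (hW : ∀ s, W s = ∑ j, u j s)
    (sstar : (i : Fin N) → S i)
    (hmax : ∀ s, W s ≤ W sstar) :
    (∀ (e : Fin N → ℝ) (i : Fin N),
      uhat e i sstar =
        (β / ((N : ℝ) - 1 + β)) * W sstar
          - (β / ((N : ℝ) - 1 + β)) * (∑ j, e j) + e i) ∧
    (∀ (e e' : Fin N → ℝ) (i : Fin N), (∀ k, 0 ≤ e k) → (∀ k, 0 ≤ e' k) →
      (∀ j, j ≠ i → e' j = e j) → e i < e' i →
      uhat e i sstar < uhat e' i sstar) ∧
    (∀ (e e' : Fin N → ℝ) (i j : Fin N), (∀ k, 0 ≤ e k) → (∀ k, 0 ≤ e' k) →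
      j ≠ i → (∀ k, k ≠ j → e' k = e k) → e j < e' j →
      uhat e' i sstar < uhat e i sstar) ∧
    (∀ (e : Fin N → ℝ) (i j : Fin N), (∀ k, 0 ≤ e k) →
      (uhat e j sstar ≤ uhat e i sstar ↔ e j ≤ e i)) := by
  have hN1 : (1:ℝ) ≤ (N:ℝ) - 1 := by
    have : (2:ℝ) ≤ (N:ℝ) := by exact_mod_cast hN
    linarith
  have hpos : (0:ℝ) < (N:ℝ) - 1 + β := by linarith
  have hNne : ((N:ℝ) - 1) ≠ 0 := by linarith
  have hc0 : 0 < β / ((N:ℝ)-1+β) := div_pos hβ hpos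
  have key : ∀ (e : Fin N → ℝ) (i : Fin N),
      uhat e i sstar = (β / ((N : ℝ) - 1 + β)) * W sstar
          - (β / ((N : ℝ) - 1 + β)) * (∑ j, e j) + e i := by
    intro e i
    have hsum : ∑ j ∈ univ.erase i, (u j sstar - e j) * r * β / ((N:ℝ)-1)
        = ((∑ j, u j sstar) - u i sstar - ((∑ j, e j) - e i)) * r * β / ((N:ℝ)-1) := by
      rw [← Finset.sum_div, ← Finset.sum_mul, ← Finset.sum_mul]
      congr 3
      rw [Finset.sum_sub_distrib, Finset.sum_erase_eq_sub (mem_univ i),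
        Finset.sum_erase_eq_sub (mem_univ i)]
    rw [huhat, hsum, hW, hr]
    field_simp
    ring
  refine ⟨key, ?_, ?_, ?_⟩
  · intro e e' i _ _ hj hlt
    rw [key, key]
    have hsum : ∑ j, e' j = (∑ j, e j) - e i + e' i := by
      have h1 : ∀ j ∈ univ.erase i, e' j = e j := fun j hj' => hj j (Finset.ne_of_mem_erase hj')
      rw [← Finset.sum_erase_add univ e' (mem_univ i), ← Finset.sum_erase_add univ e (mem_univ i),
        Finset.sum_congr rfl h1]
      ring
    have hc : β / ((N:ℝ)-1+β) < 1 := by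
      rw [div_lt_one hpos]; linarith
    rw [hsum]
    nlinarith
  · intro e e' i j _ _ hji hk hlt
    rw [key, key]
    have hsum : ∑ k, e' k = (∑ k, e k) - e j + e' j := by
      have h1 : ∀ k ∈ univ.erase j, e' k = e k := fun k hk' => hk k (Finset.ne_of_mem_erase hk')
      rw [← Finset.sum_erase_add univ e' (mem_univ j), ← Finset.sum_erase_add univ e (mem_univ j),
        Finset.sum_congr rfl h1]
      ring
    have hei : e' i = e i := hk i hji.symm
    rw [hsum, hei]
    nlinarith
  · intro e i j _
    rw [key, key]
    constructor <;> intro h <;> linarith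
end

section
/- Under the flat tax rate r = (N−1)/(N−1+β), a strategy profile s is a Nash equilibrium of the taxation version of the game if and only if for every player i and every deviation s_i', W(s_i, s_{-i}) ≥ W(s_i', s_{-i}); i.e., the Nash equilibria of the taxed game are exactly the profiles at which no unilateral deviation increases the social welfare of the original game. -/
open Finset

theorem taxed_NE_iff_no_welfare_improving_deviation
    (N : ℕ) (hN : 2 ≤ N)
    (S : Fin N → Type*)
    (u : Fin N → ((i : Fin N) → S i) → ℝ)
    (e : Fin N → ℝ)
    (β : ℝ) (hβ : 0 < β)
    (r : ℝ) (hr : r = ((N : ℝ) - 1) / ((N : ℝ) - 1 + β))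
    (uhat : Fin N → ((i : Fin N) → S i) → ℝ)
    (huhat : ∀ i s, uhat i s =
      u i s - (u i s - e i) * r
        + ∑ j ∈ univ.erase i, (u j s - e j) * r * β / ((N : ℝ) - 1))
    (W : ((i : Fin N) → S i) → ℝ)
    (hW : ∀ s, W s = ∑ j, u j s) :
    ∀ s : (i : Fin N) → S i,
      ((∀ (i : Fin N) (si' : S i), uhat i (Function.update s i si') ≤ uhat i s) ↔
       (∀ (i : Fin N) (si' : S i), W (Function.update s i si') ≤ W s)) := by
  have hn1 : (0:ℝ) < (N : ℝ) - 1 := by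
    have : (2:ℝ) ≤ (N:ℝ) := by exact_mod_cast hN
    linarith
  have hden : (0:ℝ) < (N : ℝ) - 1 + β := by linarith
  set c : ℝ := β / ((N : ℝ) - 1 + β) with hc
  have hcpos : 0 < c := div_pos hβ hden
  -- key algebraic facts
  have h1r : 1 - r = c := by
    rw [hr, hc]; field_simp; ring
  have hrb : r * β / ((N : ℝ) - 1) = c := by
    rw [hr, hc]; field_simp
  -- uhat is affine in W with slope c
  have key : ∀ i s, uhat i s = c * W s + (e i * r - c * ∑ j ∈ univ.erase i, e j) := by
    intro i s
    rw [huhat, hW]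
    have hsum : ∑ j ∈ univ.erase i, (u j s - e j) * r * β / ((N : ℝ) - 1)
        = c * ((∑ j ∈ univ.erase i, u j s) - ∑ j ∈ univ.erase i, e j) := by
      rw [← Finset.sum_sub_distrib, Finset.mul_sum]
      refine Finset.sum_congr rfl fun j _ => ?_
      rw [div_eq_iff (ne_of_gt hn1)] at hrb ⊢
      linear_combination (u j s - e j) * hrb
    rw [hsum]
    have hW' : ∑ j, u j s = u i s + ∑ j ∈ univ.erase i, u j s :=
      (Finset.add_sum_erase univ (fun j => u j s) (Finset.mem_univ i)).symm
    rw [hW']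
    linear_combination (u i s) * h1r
  intro s
  constructor
  · intro h i si'
    have := h i si'
    rw [key, key] at this
    have : c * W (Function.update s i si') ≤ c * W s := by linarith
    exact le_of_mul_le_mul_left this hcpos
  · intro h i si'
    have := h i si'
    rw [key, key]
    nlinarith [mul_le_mul_of_nonneg_left this hcpos.le]
end

section
/- Under the flat tax rate r = (N−1)/(N−1+β) with all strategy sets finite and nonempty, every sequence of strictly improving unilateral deviations in the taxation version of the game is finite (the taxed game has the finite improvement property), since each strict improvement strictly increases the social welfare W, which takes finitely many values. -/
open Finset

theorem taxed_game_finite_improvement_property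
    (N : ℕ) (hN : 2 ≤ N)
    (S : Fin N → Type*) [∀ i, Fintype (S i)] [∀ i, Nonempty (S i)]
    (u : Fin N → ((i : Fin N) → S i) → ℝ)
    (e : Fin N → ℝ)
    (β : ℝ) (hβ : 0 < β)
    (r : ℝ) (hr : r = ((N : ℝ) - 1) / ((N : ℝ) - 1 + β))
    (uhat : Fin N → ((i : Fin N) → S i) → ℝ)
    (huhat : ∀ i s, uhat i s =
      u i s - (u i s - e i) * r
        + ∑ j ∈ univ.erase i, (u j s - e j) * r * β / ((N : ℝ) - 1)) :
    ¬ ∃ seq : ℕ → ((i : Fin N) → S i),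
        ∀ n : ℕ, ∃ i : Fin N,
          (∀ j : Fin N, j ≠ i → seq (n + 1) j = seq n j) ∧
          uhat i (seq n) < uhat i (seq (n + 1)) := by
  rintro ⟨seq, hseq⟩
  have hN1 : (0:ℝ) < (N : ℝ) - 1 := by
    have : (2:ℝ) ≤ (N:ℝ) := by exact_mod_cast hN
    linarith
  have hden : (0:ℝ) < (N : ℝ) - 1 + β := by linarith
  set c : ℝ := β / ((N : ℝ) - 1 + β) with hc
  have hcpos : 0 < c := div_pos hβ hden
  set W : ((i : Fin N) → S i) → ℝ := fun s => ∑ j, u j s with hW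
  -- key identity: uhat i s = c * W s + const i
  have key : ∀ i s, uhat i s = c * W s + (e i * r - c * ∑ j ∈ univ.erase i, e j) := by
    intro i s
    have hsplit : W s = u i s + ∑ j ∈ univ.erase i, u j s := by
      rw [hW]
      exact (Finset.add_sum_erase univ (fun j => u j s) (mem_univ i)).symm
    have hrc : r * β / ((N : ℝ) - 1) = c := by
      rw [hr, hc]; field_simp
    have h1r : 1 - r = c := by
      rw [hr, hc]; field_simp; ring
    rw [huhat, hsplit]
    have hsum : ∑ j ∈ univ.erase i, (u j s - e j) * r * β / ((N : ℝ) - 1)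
        = c * (∑ j ∈ univ.erase i, u j s) - c * (∑ j ∈ univ.erase i, e j) := by
      rw [Finset.mul_sum, Finset.mul_sum, ← Finset.sum_sub_distrib]
      exact Finset.sum_congr rfl fun j _ => by rw [← hrc]; ring
    rw [hsum]
    linear_combination (u i s) * h1r
  -- each step strictly increases W
  have hmono : StrictMono fun n => W (seq n) := by
    apply strictMono_nat_of_lt_succ
    intro n
    obtain ⟨i, _, hlt⟩ := hseq n
    rw [key i (seq n), key i (seq (n + 1))] at hlt
    have := lt_of_add_lt_add_right hlt
    exact lt_of_mul_lt_mul_left this hcpos.le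
  -- contradiction: range of W ∘ seq is infinite but contained in finite image
  have hinj : Function.Injective fun n => W (seq n) := hmono.injective
  have hinf : (Set.range fun n => W (seq n)).Infinite :=
    Set.infinite_range_of_injective hinj
  have hfin : (Set.range fun n => W (seq n)).Finite := by
    apply Set.Finite.subset (Set.finite_range W)
    rintro x ⟨n, rfl⟩
    exact ⟨seq n, rfl⟩
  exact hinf hfin
end

section
/- Under the flat tax rate r = (N−1)/(N−1+β) with β = 1 and maximal social welfare W̄, for any target payoff vector (x_1, …, x_N) with Σ_i x_i = W̄, choosing tax exemptions e_i = x_i for all i yields û_i(s*) = x_i at every social-welfare-maximizing profile s*; hence any division of the maximal social welfare (and thus any fairness criterion specifying such a division) is achievable by an appropriate choice of exemptions. -/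
open Finset

theorem any_division_achievable_by_exemptions
    (N : ℕ) (hN : 2 ≤ N)
    (S : Fin N → Type*)
    (u : Fin N → ((i : Fin N) → S i) → ℝ)
    (r : ℝ) (hr : r = ((N : ℝ) - 1) / (N : ℝ))
    (W : ((i : Fin N) → S i) → ℝ)
    (hW : ∀ s, W s = ∑ j, u j s)
    (sstar : (i : Fin N) → S i)
    (hmax : ∀ s, W s ≤ W sstar)
    (x : Fin N → ℝ) (hx : ∑ i, x i = W sstar)
    (e : Fin N → ℝ) (he : ∀ i, e i = x i)
    (uhat : Fin N → ((i : Fin N) → S i) → ℝ)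
    (huhat : ∀ i s, uhat i s =
      u i s - (u i s - e i) * r
        + ∑ j ∈ univ.erase i, (u j s - e j) * r / ((N : ℝ) - 1)) :
    ∀ i, uhat i sstar = x i := by
  intro i
  have hN1 : (1:ℝ) ≤ (N:ℝ) := by exact_mod_cast Nat.one_le_of_lt hN
  have hNpos : (0:ℝ) < (N:ℝ) := by linarith
  have hN1ne : ((N:ℝ) - 1) ≠ 0 := by
    have : (2:ℝ) ≤ (N:ℝ) := by exact_mod_cast hN
    linarith
  have hsum : ∑ j ∈ univ.erase i, (u j sstar - e j) =
      (x i - u i sstar) := by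
    have h1 : ∑ j ∈ univ.erase i, (u j sstar - e j)
        = (∑ j, (u j sstar - e j)) - (u i sstar - e i) := by
      rw [← Finset.sum_erase_add _ _ (mem_univ i)]; ring
    rw [h1, Finset.sum_sub_distrib]
    have : ∑ j, e j = ∑ j, x j := by
      exact Finset.sum_congr rfl (fun j _ => he j)
    rw [this, hx, hW sstar, he i]; ring
  have hsum2 : ∑ j ∈ univ.erase i, (u j sstar - e j) * r / ((N : ℝ) - 1)
      = (x i - u i sstar) * r / ((N : ℝ) - 1) := by
    rw [← Finset.sum_div, ← Finset.sum_mul, hsum]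
  rw [huhat i sstar, hsum2, he i, hr]
  field_simp
  ring
end
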